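/- For every A-bounded operator T and α ∈ [0,1], w_A(T) ≤ ‖T‖_{A,α} ≤ sqrt(4 − 3α) · w_A(T), where w_A(T) is the A-numerical radius. -/

import Mathlib

open scoped ComplexOrder
open ContinuousLinearMap Filter Topology

variable {H : Type*} [NormedAddCommGroup H] [InnerProductSpace ℂ H] [CompleteSpace H]

/-- The A-semi-inner product `⟨x, y⟩_A = ⟨A x, y⟩` (Mathlib convention: conjugate
linear in the first variable). -/
noncomputable def aInner (A : H →L[ℂ] H) (x y : H) : ℂ := inner ℂ (A x) y

/-- The A-seminorm `‖x‖_A = sqrt ⟨x, x⟩_A`. -/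
noncomputable def aNorm (A : H →L[ℂ] H) (x : H) : ℝ := Real.sqrt (aInner A x x).re

/-- `T` is A-bounded. -/
def ABounded (A T : H →L[ℂ] H) : Prop := ∃ c > 0, ∀ x, aNorm A (T x) ≤ c * aNorm A x

/-- The A-operator seminorm. -/
noncomputable def opNormA (A T : H →L[ℂ] H) : ℝ :=
  sSup {r | ∃ x ∈ closure (Set.range A), aNorm A x = 1 ∧ r = aNorm A (T x)}

/-- The A-numerical radius. -/
noncomputable def wA (A T : H →L[ℂ] H) : ℝ :=
  sSup {r | ∃ x, aNorm A x = 1 ∧ r = ‖aInner A (T x) x‖}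

/-- The A-Crawford number. -/
noncomputable def cA (A T : H →L[ℂ] H) : ℝ :=
  sInf {r | ∃ x, aNorm A x = 1 ∧ r = ‖aInner A (T x) x‖}

/-- The `A_α`-seminorm `‖T‖_{A,α}`. -/
noncomputable def alphaNorm (A T : H →L[ℂ] H) (α : ℝ) : ℝ :=
  sSup {r | ∃ x, aNorm A x = 1 ∧
    r = Real.sqrt (α * ‖aInner A (T x) x‖ ^ 2 + (1 - α) * aNorm A (T x) ^ 2)}

/-- `S` is the A-adjoint `T^{♯_A}` of `T`: the solution of `A X = T* A` whose
range lies in the closure of the range of `A`. -/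
def IsAAdjoint (A T S : H →L[ℂ] H) : Prop :=
  A ∘L S = (ContinuousLinearMap.adjoint T) ∘L A ∧ ∀ x, S x ∈ closure (Set.range A)

/-!
Since `⟨x, y⟩_A = ⟨√A x, √A y⟩`, the A-seminorm is the pull-back of the norm of `H` along `√A`,
so Cauchy–Schwarz, homogeneity and the parallelogram law hold for it. Cauchy–Schwarz gives
`|⟨Tx, x⟩_A| ≤ ‖Tx‖_A` for `‖x‖_A = 1`, hence the lower bound. Polarization and the parallelogram
law give `|⟨Tx, y⟩_A| ≤ w_A(T) (‖x‖_A² + ‖y‖_A²)`; choosing `y = Tx / ‖Tx‖_A` yields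
`‖Tx‖_A ≤ 2 w_A(T)`, so `α |⟨Tx, x⟩_A|² + (1 - α) ‖Tx‖_A² ≤ (α + 4 (1 - α)) w_A(T)²`.
-/

section

variable {E : Type*} [NormedAddCommGroup E] [InnerProductSpace ℂ E] {A T : E →L[ℂ] E}

lemma aNorm_nonneg (x : E) : 0 ≤ aNorm A x := Real.sqrt_nonneg _

lemma norm_aInner_apply_smul (c : ℂ) (x : E) :
    ‖aInner A (T (c • x)) (c • x)‖ = ‖c‖ ^ 2 * ‖aInner A (T x) x‖ := by
  simp only [aInner, map_smul, inner_smul_left, inner_smul_right, norm_mul, Complex.norm_conj]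
  ring

lemma Complex.norm_sub_sub_I_mul_add_I_mul_le (a b c d : ℂ) :
    ‖a - b - Complex.I * c + Complex.I * d‖ ≤ ‖a‖ + ‖b‖ + ‖c‖ + ‖d‖ := by
  calc ‖a - b - Complex.I * c + Complex.I * d‖
      ≤ ‖a - b - Complex.I * c‖ + ‖Complex.I * d‖ := norm_add_le _ _
    _ ≤ ‖a - b‖ + ‖Complex.I * c‖ + ‖Complex.I * d‖ := by gcongr; exact norm_sub_le _ _
    _ ≤ ‖a‖ + ‖b‖ + ‖c‖ + ‖d‖ := by
      simp only [norm_mul, Complex.norm_I, one_mul]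
      gcongr
      exact norm_sub_le _ _

lemma wA_nonneg : 0 ≤ wA A T :=
  Real.sSup_nonneg fun _ ⟨_, _, hr⟩ ↦ hr ▸ norm_nonneg _

end

section

variable {A T : H →L[ℂ] H}

lemma aInner_eq_inner_sqrt (hA : A.IsPositive) (x y : H) :
    aInner A x y = inner ℂ (CFC.sqrt A x) (CFC.sqrt A y) := by
  have hA' : 0 ≤ A := (nonneg_iff_isPositive A).2 hA
  conv_lhs => rw [aInner, ← CFC.sqrt_mul_sqrt_self A, mul_apply_eq_comp]
  exact (CFC.sqrt_nonneg A).isSelfAdjoint.isSymmetric _ _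

lemma aNorm_eq_norm_sqrt (hA : A.IsPositive) (x : H) : aNorm A x = ‖CFC.sqrt A x‖ := by
  rw [aNorm, aInner_eq_inner_sqrt hA, norm_eq_sqrt_re_inner (𝕜 := ℂ)]
  rfl

lemma norm_aInner_le (hA : A.IsPositive) (x y : H) :
    ‖aInner A x y‖ ≤ aNorm A x * aNorm A y := by
  rw [aInner_eq_inner_sqrt hA, aNorm_eq_norm_sqrt hA, aNorm_eq_norm_sqrt hA]
  exact norm_inner_le_norm _ _

lemma norm_aInner_self (hA : A.IsPositive) (x : H) : ‖aInner A x x‖ = aNorm A x ^ 2 := by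
  simp [aInner_eq_inner_sqrt hA, aNorm_eq_norm_sqrt hA, inner_self_eq_norm_sq_to_K]

lemma aNorm_smul (hA : A.IsPositive) (c : ℂ) (x : H) : aNorm A (c • x) = ‖c‖ * aNorm A x := by
  simp only [aNorm_eq_norm_sqrt hA, map_smul, norm_smul]

lemma aNorm_add_sq_add_aNorm_sub_sq (hA : A.IsPositive) (x y : H) :
    aNorm A (x + y) ^ 2 + aNorm A (x - y) ^ 2 = 2 * (aNorm A x ^ 2 + aNorm A y ^ 2) := by
  simp only [aNorm_eq_norm_sqrt hA, map_add, map_sub]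
  exact parallelogram_law_with_norm ℂ _ _

theorem norm_aInner_le_of_forall_norm_aInner_self_le (hA : A.IsPositive) {w : ℝ}
    (hw : ∀ u, ‖aInner A (T u) u‖ ≤ w * aNorm A u ^ 2) (x y : H) :
    ‖aInner A (T x) y‖ ≤ w * (aNorm A x ^ 2 + aNorm A y ^ 2) := by
  have hpol : 4 * aInner A (T x) y = aInner A (T (x + y)) (x + y) - aInner A (T (x - y)) (x - y)
      - Complex.I * aInner A (T (x + Complex.I • y)) (x + Complex.I • y)
      + Complex.I * aInner A (T (x - Complex.I • y)) (x - Complex.I • y) := by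
    have := inner_map_polarization' ((A ∘L T : H →L[ℂ] H) : H →ₗ[ℂ] H) x y
    simp only [coe_coe, comp_apply] at this
    unfold aInner
    linear_combination 4 * this
  have hpar := aNorm_add_sq_add_aNorm_sub_sq hA x y
  have hpar' := aNorm_add_sq_add_aNorm_sub_sq hA x (Complex.I • y)
  rw [aNorm_smul hA, Complex.norm_I, one_mul] at hpar'
  have h4 : 4 * ‖aInner A (T x) y‖ ≤ 4 * (w * (aNorm A x ^ 2 + aNorm A y ^ 2)) := by
    calc 4 * ‖aInner A (T x) y‖ = ‖4 * aInner A (T x) y‖ := by simp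
      _ ≤ _ := by
        rw [hpol]
        refine (Complex.norm_sub_sub_I_mul_add_I_mul_le _ _ _ _).trans ?_
        linear_combination hw (x + y) + hw (x - y) + hw (x + Complex.I • y)
          + hw (x - Complex.I • y) + w * (hpar + hpar')
  linarith

lemma ABounded.bddAbove_norm_aInner (hA : A.IsPositive) (hT : ABounded A T) :
    BddAbove {r | ∃ x, aNorm A x = 1 ∧ r = ‖aInner A (T x) x‖} := by
  obtain ⟨c, -, hc⟩ := hT
  refine ⟨c, ?_⟩
  rintro _ ⟨x, hx, rfl⟩
  calc ‖aInner A (T x) x‖ ≤ aNorm A (T x) * aNorm A x := norm_aInner_le hA _ _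
    _ ≤ c := by simpa [hx] using hc x

lemma norm_aInner_le_wA_mul_aNorm_sq (hA : A.IsPositive) (hT : ABounded A T) (u : H) :
    ‖aInner A (T u) u‖ ≤ wA A T * aNorm A u ^ 2 := by
  rcases (aNorm_nonneg (A := A) u).eq_or_lt with hu | hu
  · simpa [← hu] using norm_aInner_le hA (T u) u
  · have hv : aNorm A ((aNorm A u : ℂ)⁻¹ • u) = 1 := by
      rw [aNorm_smul hA, norm_inv, Complex.norm_real, Real.norm_of_nonneg hu.le,
        inv_mul_cancel₀ hu.ne']
    have hle := le_csSup (hT.bddAbove_norm_aInner hA) ⟨_, hv, rfl⟩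
    rw [norm_aInner_apply_smul, norm_inv, Complex.norm_real, Real.norm_of_nonneg hu.le,
      inv_pow, inv_mul_le_iff₀ (by positivity)] at hle
    exact hle.trans_eq (mul_comm _ _)

lemma aNorm_apply_le_two_mul_of_forall_norm_aInner_self_le (hA : A.IsPositive) {w : ℝ}
    (hw : ∀ u, ‖aInner A (T u) u‖ ≤ w * aNorm A u ^ 2) {x : H} (hx : aNorm A x = 1) :
    aNorm A (T x) ≤ 2 * w := by
  rcases (aNorm_nonneg (A := A) (T x)).eq_or_lt with hb | hb
  · have := (norm_nonneg _).trans (hw x)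
    rw [hx] at this
    linarith
  · set y := ((aNorm A (T x) : ℂ)⁻¹) • T x
    have hy : aNorm A y = 1 := by
      rw [aNorm_smul hA, norm_inv, Complex.norm_real, Real.norm_of_nonneg hb.le,
        inv_mul_cancel₀ hb.ne']
    have hxy : ‖aInner A (T x) y‖ = aNorm A (T x) := by
      rw [aInner, inner_smul_right, norm_mul, ← aInner, norm_aInner_self hA, norm_inv,
        Complex.norm_real, Real.norm_of_nonneg hb.le]
      field_simp
    have := norm_aInner_le_of_forall_norm_aInner_self_le hA hw x y
    rw [hxy, hx, hy] at this
    linarith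

end

lemma le_sqrt_mul_sq_add_mul_sq {α a b : ℝ} (hα : α ≤ 1) (ha : 0 ≤ a) (hab : a ≤ b) :
    a ≤ √(α * a ^ 2 + (1 - α) * b ^ 2) :=
  Real.le_sqrt_of_sq_le <| by
    nlinarith [mul_nonneg (sub_nonneg.2 hα) (sub_nonneg.2 (pow_le_pow_left₀ ha hab 2))]

lemma sqrt_mul_sq_add_mul_sq_le {α a b w : ℝ} (hα : α ∈ Set.Icc (0 : ℝ) 1) (ha : 0 ≤ a)
    (hb : 0 ≤ b) (haw : a ≤ w) (hbw : b ≤ 2 * w) :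
    √(α * a ^ 2 + (1 - α) * b ^ 2) ≤ √(4 - 3 * α) * w := by
  obtain ⟨hα0, hα1⟩ := hα
  have hw : 0 ≤ w := ha.trans haw
  rw [← Real.sqrt_sq hw, ← Real.sqrt_mul (by linarith)]
  gcongr
  nlinarith [mul_le_mul haw haw ha hw, mul_le_mul hbw hbw hb (by linarith)]

theorem stmt3 (A T : H →L[ℂ] H) (hA : A.IsPositive) (hT : ABounded A T)
    (α : ℝ) (hα : α ∈ Set.Icc (0:ℝ) 1) :
    wA A T ≤ alphaNorm A T α ∧ alphaNorm A T α ≤ Real.sqrt (4 - 3 * α) * wA A T := by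
  have hw := norm_aInner_le_wA_mul_aNorm_sq hA hT
  have hbound : ∀ x, aNorm A x = 1 →
      √(α * ‖aInner A (T x) x‖ ^ 2 + (1 - α) * aNorm A (T x) ^ 2) ≤ √(4 - 3 * α) * wA A T :=
    fun x hx ↦ sqrt_mul_sq_add_mul_sq_le hα (norm_nonneg _) (aNorm_nonneg _)
      (by simpa [hx] using hw x) (aNorm_apply_le_two_mul_of_forall_norm_aInner_self_le hA hw hx)
  have hbdd : BddAbove {r | ∃ x, aNorm A x = 1 ∧
      r = √(α * ‖aInner A (T x) x‖ ^ 2 + (1 - α) * aNorm A (T x) ^ 2)} :=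
    ⟨_, by rintro _ ⟨x, hx, rfl⟩; exact hbound x hx⟩
  -- `Real.sSup_le` also covers the case without `A`-unit vectors, where both suprema are `0`.
  constructor
  · refine Real.sSup_le ?_ (Real.sSup_nonneg ?_)
    · rintro _ ⟨x, hx, rfl⟩
      have hcs : ‖aInner A (T x) x‖ ≤ aNorm A (T x) := by
        simpa [hx] using norm_aInner_le hA (T x) x
      exact (le_sqrt_mul_sq_add_mul_sq hα.2 (norm_nonneg _) hcs).trans
        (le_csSup hbdd ⟨x, hx, rfl⟩)
    · rintro _ ⟨x, -, rfl⟩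
      exact Real.sqrt_nonneg _
  · refine Real.sSup_le ?_ (mul_nonneg (Real.sqrt_nonneg _) wA_nonneg)
    rintro _ ⟨x, hx, rfl⟩
    exact hbound x hx
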